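/- arXiv:2510.24999 — 2 statements merged into one kernel-verified Lean document; each statement's English description precedes it below -/
import Mathlib

section
/- Let F be a finite field, A an n×n matrix over F, and x, y vectors in F^n with y ≠ Ax. If r is a uniformly random vector in F^n, then the probability that rᵀy = rᵀ(Ax) is exactly 1/|F|. -/
/-- Freivalds' lemma for matrix-vector products: if `y ≠ A x`, a uniformly random
vector `r` satisfies `rᵀ y = rᵀ (A x)` with probability exactly `1/|F|`. -/
theorem freivalds_matvec (F : Type*) [Field F] [Fintype F] (n : ℕ)
    (A : Matrix (Fin n) (Fin n) F) (x y : Fin n → F) (h : y ≠ A.mulVec x) :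
    (PMF.uniformOfFintype (Fin n → F)).toOuterMeasure
      {r : Fin n → F | ∑ i, r i * y i = ∑ i, r i * A.mulVec x i} =
      1 / (Fintype.card F : ENNReal) := by
  classical
  set v : Fin n → F := fun i => y i - A.mulVec x i with hv
  have hvne : v ≠ 0 := by
    intro hz
    apply h
    funext i
    have := congrFun hz i
    simpa [v, sub_eq_zero] using this
  let f : (Fin n → F) →ₗ[F] F :=
    { toFun := fun r => ∑ i, r i * v i
      map_add' := by intro a b; simp [add_mul, Finset.sum_add_distrib]
      map_smul' := by intro c a; simp [Finset.mul_sum, mul_assoc] }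
  have hsurj : Function.Surjective f := by
    obtain ⟨i0, hi0⟩ := Function.ne_iff.mp hvne
    intro c
    refine ⟨(Pi.single i0 (c * (v i0)⁻¹) : Fin n → F), ?_⟩
    have : ∀ i, (Pi.single i0 (c * (v i0)⁻¹) : Fin n → F) i * v i
        = if i = i0 then c else 0 := by
      intro i
      by_cases hi : i = i0
      · subst hi; simp [mul_assoc, inv_mul_cancel₀ hi0]
      · simp [Pi.single_apply, hi]
    simp only [f, LinearMap.coe_mk, AddHom.coe_mk]
    rw [Finset.sum_congr rfl fun i _ => this i]
    simp
  have hset : {r : Fin n → F | ∑ i, r i * y i = ∑ i, r i * A.mulVec x i}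
      = (LinearMap.ker f : Set (Fin n → F)) := by
    ext r
    simp only [Set.mem_setOf_eq, SetLike.mem_coe, LinearMap.mem_ker, f,
      LinearMap.coe_mk, AddHom.coe_mk, v, mul_sub, Finset.sum_sub_distrib,
      sub_eq_zero]
  rw [hset, PMF.toOuterMeasure_uniformOfFintype_apply]
  have h2 : Nat.card ((Fin n → F) ⧸ LinearMap.ker f) = Fintype.card F := by
    have htop : LinearMap.range f = ⊤ := LinearMap.range_eq_top.mpr hsurj
    have e := f.quotKerEquivRange.trans (LinearEquiv.ofTop _ htop)
    rw [Nat.card_congr e.toEquiv, Nat.card_eq_fintype_card]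
  have h1 := Submodule.card_eq_card_quotient_mul_card (LinearMap.ker f)
  rw [h2, Nat.card_eq_fintype_card, Nat.card_eq_fintype_card] at h1
  have hcard : Fintype.card {x_1 // x_1 ∈ (LinearMap.ker f : Set (Fin n → F))}
      = Fintype.card (LinearMap.ker f) := by
    apply Fintype.card_congr; rfl
  rw [hcard, h1]
  have hF : (Fintype.card F : ENNReal) ≠ 0 := by
    exact_mod_cast Fintype.card_ne_zero
  have hk : (Fintype.card (LinearMap.ker f) : ENNReal) ≠ 0 := by
    exact_mod_cast Fintype.card_ne_zero
  rw [Nat.cast_mul, mul_comm]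
  calc ((Fintype.card (LinearMap.ker f) : ENNReal)) /
      ((Fintype.card F : ENNReal) * (Fintype.card (LinearMap.ker f) : ENNReal))
      = ((Fintype.card (LinearMap.ker f) : ENNReal) * 1) /
        ((Fintype.card (LinearMap.ker f) : ENNReal) * (Fintype.card F : ENNReal)) := by
        rw [mul_one, mul_comm]
    _ = 1 / (Fintype.card F : ENNReal) := ENNReal.mul_div_mul_left _ _ hk (by simp)
end

section
/- Let F be a finite field, A an n×n matrix over F, and x, y ∈ F^n with y ≠ Ax. If R is an n×k matrix whose k columns are independent uniformly random vectors in F^n, then the probability that Rᵀy = Rᵀ(Ax) is exactly 1/|F|^k. -/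
/-!
The event is the kernel of the additive map `R ↦ (y - A x)ᵀ R` onto `F^k`, which is surjective
because `y - A x ≠ 0`. A kernel of a surjective homomorphism has index `|F|^k`, so the uniform
measure gives it mass `1 / |F|^k`.
-/

open Matrix

theorem PMF.toOuterMeasure_uniformOfFintype_ker {G H : Type*} [AddGroup G] [Fintype G]
    [AddGroup H] (f : G →+ H) (hf : Function.Surjective f) :
    (PMF.uniformOfFintype G).toOuterMeasure f.ker = 1 / Nat.card H := by
  classical
  have hcard : Nat.card f.ker * Nat.card H = Fintype.card G := by
    rw [← Nat.card_eq_fintype_card, ← f.ker.card_mul_index, AddSubgroup.index_ker,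
      AddMonoidHom.range_eq_top.mpr hf, AddSubgroup.card_top]
  have hker : (Nat.card f.ker : ENNReal) ≠ 0 := Nat.cast_ne_zero.mpr Nat.card_pos.ne'
  rw [PMF.toOuterMeasure_uniformOfFintype_apply, ← Nat.card_eq_fintype_card,
    SetLike.coe_sort_coe, ← hcard, Nat.cast_mul,
    ← ENNReal.mul_div_mul_left 1 _ hker (ENNReal.natCast_ne_top _), mul_one]

theorem Matrix.surjective_vecMul_of_ne_zero {ι κ F : Type*} [Fintype ι] [DecidableEq ι]
    [DivisionRing F] {v : ι → F} (hv : v ≠ 0) :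
    Function.Surjective fun R : Matrix ι κ F => v ᵥ* R := by
  obtain ⟨i, hi⟩ := Function.ne_iff.mp hv
  intro c
  refine ⟨vecMulVec (Pi.single i (v i)⁻¹) c, ?_⟩
  simp [vecMul_vecMulVec, mul_inv_cancel₀ hi]

/-- Batched Freivalds' lemma: for `y ≠ A x` and `R` an `n × k` matrix with i.i.d.
uniform entries (equivalently, independent uniform columns), `Rᵀ y = Rᵀ (A x)`
holds with probability exactly `1/|F|^k`. -/
theorem batched_freivalds_matvec (F : Type*) [Field F] [Fintype F] (n k : ℕ)
    (A : Matrix (Fin n) (Fin n) F) (x y : Fin n → F) (h : y ≠ A.mulVec x) :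
    (PMF.uniformOfFintype (Matrix (Fin n) (Fin k) F)).toOuterMeasure
      {R : Matrix (Fin n) (Fin k) F |
        (fun j => ∑ i, R i j * y i) = fun j => ∑ i, R i j * A.mulVec x i} =
      1 / (Fintype.card F : ENNReal) ^ k := by
  let f : Matrix (Fin n) (Fin k) F →+ (Fin k → F) :=
    AddMonoidHom.mk' (fun R => (y - A *ᵥ x) ᵥ* R) fun R S => vecMul_add R S _
  have hset : {R : Matrix (Fin n) (Fin k) F |
      (fun j => ∑ i, R i j * y i) = fun j => ∑ i, R i j * A.mulVec x i} = f.ker := by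
    ext R
    change Rᵀ *ᵥ y = Rᵀ *ᵥ (A *ᵥ x) ↔ (y - A *ᵥ x) ᵥ* R = 0
    rw [sub_vecMul, sub_eq_zero, mulVec_transpose, mulVec_transpose]
  rw [hset, PMF.toOuterMeasure_uniformOfFintype_ker f
      (surjective_vecMul_of_ne_zero (sub_ne_zero.mpr h)),
    Nat.card_fun, Nat.card_fin, Nat.card_eq_fintype_card, Nat.cast_pow]
end
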